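/- Let H be a finitely generated subgroup of a hyperbolic group G. Then H is quasiconvex in G if and only if H is undistorted in G. -/
import Mathlib


open Pointwise

variable {G : Type*} [Group G]

/-- Word length of `g` with respect to a (symmetrized) generating set `S`. -/
noncomputable def wordLength (S : Set G) (g : G) : ℕ :=
  sInf {n | ∃ l : List G, (∀ x ∈ l, x ∈ S) ∧ l.length = n ∧ l.prod = g}

/-- Word metric (distance in the Cayley graph). -/
noncomputable def wdist (S : Set G) (g h : G) : ℕ := wordLength S (g⁻¹ * h)

/-- A discrete geodesic of length `n` in the Cayley graph of `G` w.r.t. `S`. -/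
def IsGeodesic (S : Set G) (p : ℕ → G) (n : ℕ) : Prop :=
  ∀ i j : ℕ, i ≤ j → j ≤ n → wdist S (p i) (p j) = j - i

/-- `Q` is `ε`-quasiconvex: every geodesic between two elements of `Q`
lies in the closed `ε`-neighborhood of `Q`. -/
def IsQuasiconvex (S : Set G) (ε : ℝ) (Q : Set G) : Prop :=
  ∀ (p : ℕ → G) (n : ℕ), IsGeodesic S p n → p 0 ∈ Q → p n ∈ Q →
    ∀ i ≤ n, ∃ q ∈ Q, (wdist S (p i) q : ℝ) ≤ ε

/-- All geodesic triangles in the Cayley graph are `δ`-slim. -/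
def SlimTriangles (S : Set G) (δ : ℝ) : Prop :=
  ∀ (p q r : ℕ → G) (np nq nr : ℕ),
    IsGeodesic S p np → IsGeodesic S q nq → IsGeodesic S r nr →
    p np = q 0 → r 0 = p 0 → r nr = q nq →
    ∀ i ≤ nr, ∃ j : ℕ, (j ≤ np ∧ (wdist S (r i) (p j) : ℝ) ≤ δ) ∨
                       (j ≤ nq ∧ (wdist S (r i) (q j) : ℝ) ≤ δ)

/-- expressibility predicate -/
def HasWord (S : Set G) (g : G) : Prop := ∃ l : List G, (∀ x ∈ l, x ∈ S) ∧ l.prod = g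

lemma hasWord_of_mem_closure {S : Set G} (hSsym : S⁻¹ = S) {g : G}
    (hg : g ∈ Subgroup.closure S) : HasWord S g := by
  have h1 : g ∈ Submonoid.closure (S ∪ S⁻¹) := by
    rw [← Subgroup.closure_toSubmonoid] at *; exact hg
  rw [hSsym, Set.union_self] at h1
  obtain ⟨l, h2, h3⟩ := Submonoid.exists_list_of_mem_closure h1
  exact ⟨l, h2, h3⟩

lemma wordLength_le {S : Set G} {g : G} (l : List G) (h1 : ∀ x ∈ l, x ∈ S)
    (h2 : l.prod = g) : wordLength S g ≤ l.length :=
  Nat.sInf_le ⟨l, h1, rfl, h2⟩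

lemma wordLength_spec {S : Set G} {g : G} (hg : HasWord S g) :
    ∃ l : List G, (∀ x ∈ l, x ∈ S) ∧ l.length = wordLength S g ∧ l.prod = g := by
  obtain ⟨l, h1, h2⟩ := hg
  have hne : {n | ∃ l : List G, (∀ x ∈ l, x ∈ S) ∧ l.length = n ∧ l.prod = g}.Nonempty :=
    ⟨l.length, l, h1, rfl, h2⟩
  obtain ⟨l', h1', h2', h3'⟩ := Nat.sInf_mem hne
  exact ⟨l', h1', h2', h3'⟩

lemma wordLength_one (S : Set G) : wordLength S 1 = 0 :=
  Nat.le_zero.mp (wordLength_le [] (by simp) (by simp))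

lemma eq_one_of_wordLength_eq_zero {S : Set G} {g : G} (hg : HasWord S g)
    (h : wordLength S g = 0) : g = 1 := by
  obtain ⟨l, _, hl, hp⟩ := wordLength_spec hg
  rw [h, List.length_eq_zero_iff] at hl
  rw [← hp, hl, List.prod_nil]

lemma hasWord_mul {S : Set G} {a b : G} (ha : HasWord S a) (hb : HasWord S b) :
    HasWord S (a * b) := by
  obtain ⟨la, h1, h2⟩ := ha; obtain ⟨lb, h3, h4⟩ := hb
  refine ⟨la ++ lb, ?_, by rw [List.prod_append, h2, h4]⟩
  intro x hx
  rcases List.mem_append.mp hx with h | h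
  exacts [h1 x h, h3 x h]

lemma wordLength_mul_le {S : Set G} {a b : G} (ha : HasWord S a) (hb : HasWord S b) :
    wordLength S (a * b) ≤ wordLength S a + wordLength S b := by
  obtain ⟨la, h1, h2, h3⟩ := wordLength_spec ha
  obtain ⟨lb, h4, h5, h6⟩ := wordLength_spec hb
  calc wordLength S (a * b) ≤ (la ++ lb).length := wordLength_le _
        (by intro x hx; rcases List.mem_append.mp hx with h | h; exacts [h1 x h, h4 x h])
        (by rw [List.prod_append, h3, h6])
    _ = _ := by rw [List.length_append, h2, h5]

lemma hasWord_inv {S : Set G} (hSsym : S⁻¹ = S) {g : G} (hg : HasWord S g) :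
    HasWord S g⁻¹ := by
  obtain ⟨l, h1, h2⟩ := hg
  refine ⟨(l.map (fun x => x⁻¹)).reverse, ?_, by rw [← List.prod_inv_reverse, h2]⟩
  intro x hx
  rw [List.mem_reverse, List.mem_map] at hx
  obtain ⟨y, hy, rfl⟩ := hx
  rw [← hSsym]; simpa using h1 y hy

lemma wordLength_inv_le {S : Set G} (hSsym : S⁻¹ = S) {g : G} (hg : HasWord S g) :
    wordLength S g⁻¹ ≤ wordLength S g := by
  obtain ⟨l, h1, h2, h3⟩ := wordLength_spec hg
  calc wordLength S g⁻¹ ≤ ((l.map (fun x => x⁻¹)).reverse).length := wordLength_le _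
        (by intro x hx; rw [List.mem_reverse, List.mem_map] at hx
            obtain ⟨y, hy, rfl⟩ := hx; rw [← hSsym]; simpa using h1 y hy)
        (by rw [← List.prod_inv_reverse, h3])
    _ = wordLength S g := by simpa using h2

lemma wordLength_inv {S : Set G} (hSsym : S⁻¹ = S) {g : G} (hg : HasWord S g) :
    wordLength S g⁻¹ = wordLength S g :=
  le_antisymm (wordLength_inv_le hSsym hg)
    (by simpa using wordLength_inv_le hSsym (hasWord_inv hSsym hg))

section WDist

variable {S : Set G}

lemma wdist_self (S : Set G) (a : G) : wdist S a a = 0 := by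
  simp [wdist, wordLength_one]

lemma wdist_triangle (hSall : ∀ g : G, HasWord S g) (a b c : G) :
    wdist S a c ≤ wdist S a b + wdist S b c := by
  have : a⁻¹ * c = (a⁻¹ * b) * (b⁻¹ * c) := by group
  rw [wdist, this]
  exact wordLength_mul_le (hSall _) (hSall _)

lemma wdist_comm (hSsym : S⁻¹ = S) (hSall : ∀ g : G, HasWord S g) (a b : G) : wdist S a b = wdist S b a := by
  have : b⁻¹ * a = (a⁻¹ * b)⁻¹ := by group
  rw [wdist, wdist, this, wordLength_inv hSsym (hSall _)]

lemma wdist_eq_zero (hSall : ∀ g : G, HasWord S g) {a b : G} (h : wdist S a b = 0) : a = b := by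
  have := eq_one_of_wordLength_eq_zero (hSall (a⁻¹ * b)) h
  have : a * (a⁻¹ * b) = a * 1 := by rw [this]
  simpa [mul_assoc] using this.symm

/-- geodesics exist between any two points -/
lemma exists_geodesic (hSall : ∀ g : G, HasWord S g) (a b : G) :
    ∃ p : ℕ → G, ∃ n : ℕ, IsGeodesic S p n ∧ p 0 = a ∧ p n = b ∧ n = wdist S a b := by
  obtain ⟨l, h1, h2, h3⟩ := wordLength_spec (hSall (a⁻¹ * b))
  refine ⟨fun i => a * (l.take i).prod, l.length, ?_, by simp, ?_, by rw [wdist, h2]⟩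
  · have key : ∀ i j : ℕ, i ≤ j →
        wdist S (a * (l.take i).prod) (a * (l.take j).prod) ≤ j - i := by
      intro i j hij
      have hd : l.take j = l.take i ++ (l.drop i).take (j - i) := by
        rw [← List.take_add, Nat.add_sub_cancel' hij]
      have hprod : (a * (l.take i).prod)⁻¹ * (a * (l.take j).prod)
          = ((l.drop i).take (j - i)).prod := by
        rw [hd, List.prod_append]; group
      rw [wdist, hprod]
      calc wordLength S ((l.drop i).take (j - i)).prod
          ≤ ((l.drop i).take (j - i)).length := wordLength_le _
            (fun x hx => h1 x (List.mem_of_mem_drop (List.mem_of_mem_take hx))) rfl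
        _ ≤ j - i := by simpa using List.length_take_le _ _
    intro i j hij hj
    refine le_antisymm (key i j hij) ?_
    show j - i ≤ wdist S (a * (l.take i).prod) (a * (l.take j).prod)
    have h0n : wdist S (a * (l.take 0).prod) (a * (l.take l.length).prod) = l.length := by
      simp only [List.take_zero, List.prod_nil, mul_one, List.take_length]
      rw [wdist]
      have : a⁻¹ * (a * l.prod) = a⁻¹ * b := by rw [h3]; group
      rw [this, h2]
    have t1 := wdist_triangle hSall (a * (l.take 0).prod) (a * (l.take i).prod)
        (a * (l.take l.length).prod)
    have t2 := wdist_triangle hSall (a * (l.take i).prod) (a * (l.take j).prod)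
        (a * (l.take l.length).prod)
    have k1 := key 0 i (Nat.zero_le i)
    have k2 := key j l.length hj
    omega
  · simp [List.take_length, ← mul_assoc, h3]

/-- subsegments of geodesics are geodesics -/
lemma IsGeodesic.subseg {p : ℕ → G} {n : ℕ} (hp : IsGeodesic S p n) (i₀ n' : ℕ)
    (h : i₀ + n' ≤ n) : IsGeodesic S (fun t => p (i₀ + t)) n' := by
  intro i j hij hj
  have := hp (i₀ + i) (i₀ + j) (by omega) (by omega)
  simpa [Nat.add_sub_add_left] using this

end WDist

def IsPath (S : Set G) (w : ℕ → G) (m : ℕ) : Prop :=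
  ∀ i, i < m → wdist S (w i) (w (i + 1)) ≤ 1

lemma path_dist {S : Set G} (hSall : ∀ g : G, HasWord S g) {w : ℕ → G} {m : ℕ}
    (hw : IsPath S w m) : ∀ i j, i ≤ j → j ≤ m → wdist S (w i) (w j) ≤ j - i := by
  intro i j hij hjm
  induction j, hij using Nat.le_induction with
  | base => simp [wdist_self]
  | succ j hij ih =>
    have h1 := ih (by omega)
    have h2 := hw j (by omega)
    have h3 := wdist_triangle hSall (w i) (w j) (w (j + 1))
    omega

lemma ball_finite {S : Set G} (hSfin : S.Finite) (hSall : ∀ g : G, HasWord S g) :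
    ∀ R : ℕ, {g : G | wordLength S g ≤ R}.Finite := by
  intro R
  induction R with
  | zero =>
    refine Set.Finite.subset (Set.finite_singleton 1) ?_
    intro g hg
    simp only [Set.mem_setOf_eq, Nat.le_zero] at hg
    simp [eq_one_of_wordLength_eq_zero (hSall g) hg]
  | succ R ih =>
    refine Set.Finite.subset (Set.Finite.insert 1
      (Set.Finite.biUnion hSfin (fun s _ => ih.image (fun x => s * x)))) ?_
    intro g hg
    simp only [Set.mem_setOf_eq] at hg
    obtain ⟨l, h1, h2, h3⟩ := wordLength_spec (hSall g)
    match l, h1, h2, h3 with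
    | [], _, _, h3 => left; simp [← h3]
    | s :: l', h1, h2, h3 =>
      right
      refine Set.mem_biUnion (h1 s (by simp)) ⟨l'.prod, ?_, by rw [← h3, List.prod_cons]⟩
      simp only [Set.mem_setOf_eq]
      calc wordLength S l'.prod ≤ l'.length :=
            wordLength_le l' (fun x hx => h1 x (by simp [hx])) rfl
        _ ≤ R := by simp only [List.length_cons] at h2; omega

/-- the bisection lemma: a geodesic is within `δ·k` of any path of length `≤ 2^k`
joining its endpoints. -/
lemma bisect {S : Set G} (hSall : ∀ g : G, HasWord S g) {δ : ℝ} (hδ : 0 ≤ δ)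
    (hslim : SlimTriangles S δ) :
    ∀ k : ℕ, ∀ (w : ℕ → G) (m : ℕ), IsPath S w m → m ≤ 2 ^ k →
      ∀ (p : ℕ → G) (n : ℕ), IsGeodesic S p n → p 0 = w 0 → p n = w m →
        ∀ i ≤ n, ∃ j ≤ m, (wdist S (p i) (w j) : ℝ) ≤ δ * k := by
  intro k
  induction k with
  | zero =>
    intro w m hw hm p n hp h0 hn i hi
    have hnm : n ≤ 1 := by
      have e1 := hp 0 n (Nat.zero_le n) le_rfl
      have e2 := path_dist hSall hw 0 m (Nat.zero_le m) le_rfl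
      rw [h0, hn] at e1
      simp at hm; omega
    rcases Nat.lt_or_ge i n with h | h
    · have : i = 0 := by omega
      exact ⟨0, Nat.zero_le m, by simp [this, h0, wdist_self]⟩
    · have : i = n := by omega
      exact ⟨m, le_rfl, by simp [this, hn, wdist_self]⟩
  | succ k ih =>
    intro w m hw hm p n hp h0 hn i hi
    set m₁ := min m (2 ^ k) with hm₁
    have hm₁m : m₁ ≤ m := min_le_left _ _
    obtain ⟨pa, na, hpa, hpa0, hpan, -⟩ := exists_geodesic hSall (w 0) (w m₁)
    obtain ⟨pb, nb, hpb, hpb0, hpbn, -⟩ := exists_geodesic hSall (w m₁) (w m)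
    obtain ⟨j, hj⟩ := hslim pa pb p na nb n hpa hpb hp (by rw [hpan, hpb0])
      (by rw [h0, hpa0]) (by rw [hn, hpbn]) i hi
    rcases hj with ⟨hjna, hd⟩ | ⟨hjnb, hd⟩
    · -- j on first side; recurse on first half of path
      have hw1 : IsPath S w m₁ := fun t ht => hw t (by omega)
      obtain ⟨j', hj', hd'⟩ := ih w m₁ hw1 (min_le_right _ _) pa na hpa hpa0 hpan
        j hjna
      refine ⟨j', le_trans hj' hm₁m, ?_⟩
      have tri := wdist_triangle hSall (p i) (pa j) (w j')
      calc (wdist S (p i) (w j') : ℝ) ≤ (wdist S (p i) (pa j) : ℝ) + wdist S (pa j) (w j') := by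
            exact_mod_cast tri
        _ ≤ δ + δ * k := add_le_add hd hd'
        _ = δ * (k + 1 : ℕ) := by push_cast; ring
    · -- j on second side; recurse on second half of path
      have hw2 : IsPath S (fun t => w (m₁ + t)) (m - m₁) := fun t ht => hw (m₁ + t) (by omega)
      have hend : pb nb = w (m₁ + (m - m₁)) := by rw [Nat.add_sub_cancel' hm₁m, hpbn]
      obtain ⟨j', hj', hd'⟩ := ih _ (m - m₁) hw2 (by simp at hm ⊢; omega) pb nb hpb
        (by simpa using hpb0) hend j hjnb
      refine ⟨m₁ + j', by omega, ?_⟩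
      have tri := wdist_triangle hSall (p i) (pb j) (w (m₁ + j'))
      calc (wdist S (p i) (w (m₁ + j')) : ℝ)
          ≤ (wdist S (p i) (pb j) : ℝ) + wdist S (pb j) (w (m₁ + j')) := by exact_mod_cast tri
        _ ≤ δ + δ * k := add_le_add hd hd'
        _ = δ * (k + 1 : ℕ) := by push_cast; ring

lemma IsGeodesic.isPath {S : Set G} {p : ℕ → G} {n : ℕ} (hp : IsGeodesic S p n) :
    IsPath S p n := fun i hi => by
  rw [hp i (i + 1) (by omega) (by omega)]; omega

lemma path_glue {S : Set G} {w1 w2 : ℕ → G} {m1 m2 : ℕ} (h1 : IsPath S w1 m1)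
    (h2 : IsPath S w2 m2) (hg : w1 m1 = w2 0) :
    ∃ w : ℕ → G, IsPath S w (m1 + m2) ∧ (∀ j ≤ m1, w j = w1 j) ∧
      (∀ j, m1 ≤ j → w j = w2 (j - m1)) := by
  refine ⟨fun j => if j < m1 then w1 j else w2 (j - m1), ?_, ?_, ?_⟩
  · intro i hi
    rcases Nat.lt_or_ge (i + 1) m1 with h | h
    · simp only [if_pos (by omega : i < m1), if_pos h]
      exact h1 i (by omega)
    · rcases Nat.lt_or_ge i m1 with h' | h'
      · -- i + 1 = m1
        have e1 : i + 1 = m1 := by omega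
        simp only [if_pos h', if_neg (by omega : ¬ i + 1 < m1)]
        rw [show i + 1 - m1 = 0 by omega, ← hg, ← e1]
        exact h1 i (by omega)
      · simp only [if_neg (by omega : ¬ i < m1), if_neg (by omega : ¬ i + 1 < m1)]
        have e : i + 1 - m1 = (i - m1) + 1 := by omega
        rw [e]
        exact h2 (i - m1) (by omega)
  · intro j hj
    rcases Nat.lt_or_ge j m1 with h | h
    · simp [if_pos h]
    · have : j = m1 := by omega
      simp [this, ← hg]
  · intro j hj
    simp [if_neg (by omega : ¬ j < m1)]

/-- path through the subgroup following a `T`-word, staying `L`-close to `H`. -/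
lemma hpath {S : Set G} (hSsym : S⁻¹ = S) (hSall : ∀ g : G, HasWord S g)
    {H : Subgroup G} {T : Set G} (hTsub : T ⊆ (H : Set G)) (L : ℕ)
    (hL : ∀ t ∈ T, wordLength S t ≤ L) :
    ∀ l : List G, (∀ t ∈ l, t ∈ T) → ∀ u : G, u ∈ H →
      ∃ w : ℕ → G, ∃ m : ℕ, IsPath S w m ∧ m ≤ L * l.length ∧ w 0 = u ∧
        w m = u * l.prod ∧ ∀ j ≤ m, ∃ q ∈ (H : Set G), wdist S (w j) q ≤ L := by
  intro l
  induction l with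
  | nil =>
    intro _ u hu
    exact ⟨fun _ => u, 0, fun i hi => by omega, by simp, rfl, by simp,
      fun j _ => ⟨u, hu, by simp [wdist_self]⟩⟩
  | cons t l ihl =>
    intro hl u hu
    have ht : t ∈ T := hl t (by simp)
    obtain ⟨p1, n1, hp1, hp10, hp1n, hn1⟩ := exists_geodesic hSall u (u * t)
    have hn1L : n1 ≤ L := by
      rw [hn1, wdist]
      have e : u⁻¹ * (u * t) = t := by group
      rw [e]; exact hL t ht
    obtain ⟨w2, m2, hw2, hm2, hw20, hw2m, hq2⟩ :=
      ihl (fun x hx => hl x (by simp [hx])) (u * t) (H.mul_mem hu (hTsub ht))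
    obtain ⟨w, hw, hwl, hwr⟩ := path_glue hp1.isPath hw2 (by rw [hp1n, hw20])
    refine ⟨w, n1 + m2, hw, ?_, ?_, ?_, ?_⟩
    · simp only [List.length_cons, Nat.mul_succ]; omega
    · rw [hwl 0 (Nat.zero_le _), hp10]
    · rw [hwr (n1 + m2) (by omega), Nat.add_sub_cancel_left, hw2m]
      rw [List.prod_cons, mul_assoc]
    · intro j hj
      rcases le_or_gt j n1 with h | h
      · refine ⟨u, hu, ?_⟩
        rw [hwl j h, wdist_comm hSsym hSall]
        have := hp1 0 j (Nat.zero_le _) h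
        rw [hp10] at this
        omega
      · obtain ⟨q, hqH, hqd⟩ := hq2 (j - n1) (by omega)
        refine ⟨q, hqH, ?_⟩
        rw [hwr j (by omega)]
        exact hqd

lemma sq_succ_le_pow (s : ℕ) : (s + 1) ^ 2 ≤ 2 ^ (2 * s + 1) := by
  induction s with
  | zero => norm_num
  | succ s ih =>
    have h4 : (s + 1 + 1) ^ 2 ≤ 4 * (s + 1) ^ 2 := by
      have h5 := Nat.pow_le_pow_left (show s + 1 + 1 ≤ 2 * (s + 1) by omega) 2
      calc (s + 1 + 1) ^ 2 ≤ (2 * (s + 1)) ^ 2 := h5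
        _ = 4 * (s + 1) ^ 2 := by ring
    calc (s + 1 + 1) ^ 2 ≤ 4 * (s + 1) ^ 2 := h4
      _ ≤ 4 * 2 ^ (2 * s + 1) := by omega
      _ = 2 ^ ((2 * s + 1) + 2) := by rw [pow_add 2 (2 * s + 1) 2]; ring
      _ = 2 ^ (2 * (s + 1) + 1) := by congr 1

lemma log_le_two_sqrt (n : ℕ) : Nat.log 2 n ≤ 2 * Nat.sqrt n := by
  rcases Nat.eq_zero_or_pos n with h | h
  · simp [h]
  have h1 : n < 2 ^ (2 * Nat.sqrt n + 1) := by
    calc n < (Nat.sqrt n).succ * (Nat.sqrt n).succ := Nat.lt_succ_sqrt n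
      _ = (Nat.sqrt n + 1) ^ 2 := by rw [Nat.succ_eq_add_one]; ring
      _ ≤ 2 ^ (2 * Nat.sqrt n + 1) := sq_succ_le_pow _
  have := Nat.log_lt_of_lt_pow (by omega) h1
  omega

lemma nat_sqrt_le_real_sqrt (d : ℕ) : (Nat.sqrt d : ℝ) ≤ Real.sqrt d := by
  refine (Real.le_sqrt (by positivity) (by positivity)).mpr ?_
  exact_mod_cast Nat.sqrt_le' d

lemma le_sq_of_le_sqrt_mul {A C x : ℝ} (hA : 0 ≤ A) (hC : 0 ≤ C) (hx : 0 ≤ x)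
    (h : x ≤ A * Real.sqrt x + C) : x ≤ (A + C + 1) ^ 2 := by
  by_contra hcon
  push_neg at hcon
  have h1 : A + C + 1 < Real.sqrt x := by
    have := Real.sqrt_lt_sqrt (by positivity) hcon
    rwa [Real.sqrt_sq (by positivity)] at this
  have h2 : Real.sqrt x * Real.sqrt x = x := Real.mul_self_sqrt hx
  nlinarith [Real.sqrt_nonneg x]

noncomputable def distH (S : Set G) (Q : Set G) (x : G) : ℕ := sInf ((wdist S x) '' Q)

lemma distH_le {S Q : Set G} {x q : G} (hq : q ∈ Q) : distH S Q x ≤ wdist S x q :=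
  Nat.sInf_le ⟨q, hq, rfl⟩

lemma distH_spec {S Q : Set G} (hQ : Q.Nonempty) (x : G) :
    ∃ q ∈ Q, wdist S x q = distH S Q x := by
  have := Nat.sInf_mem (hQ.image (wdist S x))
  obtain ⟨q, hq, hqe⟩ := this
  exact ⟨q, hq, hqe⟩

/-- A finitely generated subgroup of a hyperbolic group is quasiconvex iff it is
undistorted. -/
theorem quasiconvex_iff_undistorted (S : Set G) (hSfin : S.Finite) (hSsym : S⁻¹ = S)
    (hSgen : Subgroup.closure S = ⊤) (δ : ℝ) (hδ : 0 ≤ δ) (hslim : SlimTriangles S δ)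
    (H : Subgroup G) (T : Set G) (hTfin : T.Finite) (hTsub : T ⊆ (H : Set G))
    (hTsym : T⁻¹ = T) (hTgen : Subgroup.closure T = H) :
    (∃ ε : ℝ, 0 ≤ ε ∧ IsQuasiconvex S ε (H : Set G)) ↔
    (∃ c : ℝ, 0 < c ∧ ∀ h ∈ H, (wordLength T h : ℝ) ≤ c * (wordLength S h : ℝ)) := by
  have hSall : ∀ g : G, HasWord S g := fun g =>
    hasWord_of_mem_closure hSsym (by rw [hSgen]; trivial)
  have hTall : ∀ h : G, h ∈ H → HasWord T h := fun h hh =>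
    hasWord_of_mem_closure hTsym (by rw [hTgen]; exact hh)
  constructor
  · -- quasiconvex → undistorted
    rintro ⟨ε, hε, hqc⟩
    set k := ⌈ε⌉₊ with hk
    have hball : ({g : G | wordLength S g ≤ 2 * k + 1} ∩ (H : Set G)).Finite :=
      (ball_finite hSfin hSall (2 * k + 1)).inter_of_left _
    set M := hball.toFinset.sup (wordLength T) with hM
    have hMle : ∀ g : G, g ∈ H → wordLength S g ≤ 2 * k + 1 → wordLength T g ≤ M := by
      intro g hg hgl
      exact Finset.le_sup (f := wordLength T) (hball.mem_toFinset.mpr ⟨hgl, hg⟩)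
    refine ⟨(M : ℝ) + 1, by positivity, ?_⟩
    intro h hh
    obtain ⟨p, n, hp, hp0, hpn, hn⟩ := exists_geodesic hSall 1 h
    have hnw : n = wordLength S h := by rw [hn, wdist]; simp
    have key : ∀ i : ℕ, ∃ q, q ∈ (H : Set G) ∧ wdist S (p (min i n)) q ≤ k := by
      intro i
      obtain ⟨q, hq1, hq2⟩ := hqc p n hp (by rw [hp0]; exact H.one_mem)
        (by rw [hpn]; exact hh) (min i n) (min_le_right _ _)
      refine ⟨q, hq1, ?_⟩
      have h2 : (wdist S (p (min i n)) q : ℝ) ≤ (k : ℝ) := le_trans hq2 (Nat.le_ceil ε)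
      exact_mod_cast h2
    choose q0 hq0H hq0d using key
    set qq : ℕ → G := fun i => if i = 0 then 1 else if i = n then h else q0 i with hqq
    have hqqH : ∀ i, qq i ∈ H := by
      intro i
      simp only [hqq]
      split
      · exact H.one_mem
      split
      · exact hh
      · exact hq0H i
    have hqqd : ∀ i ≤ n, wdist S (p i) (qq i) ≤ k := by
      intro i hi
      simp only [hqq]
      split
      · next h0 => rw [h0, hp0]; simp [wdist_self]
      split
      · next h0 => rw [h0, hpn]; simp [wdist_self]
      · have h3 := hq0d i
        rwa [min_eq_left hi] at h3
    have factor : ∀ i, i < n → (qq i)⁻¹ * qq (i + 1) ∈ H ∧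
        wordLength T ((qq i)⁻¹ * qq (i + 1)) ≤ M := by
      intro i hi
      have hmem : (qq i)⁻¹ * qq (i + 1) ∈ H := H.mul_mem (H.inv_mem (hqqH i)) (hqqH (i + 1))
      refine ⟨hmem, hMle _ hmem ?_⟩
      have t1 := wdist_triangle hSall (qq i) (p i) (qq (i + 1))
      have t2 := wdist_triangle hSall (p i) (p (i + 1)) (qq (i + 1))
      have e1 : wdist S (qq i) (p i) = wdist S (p i) (qq i) := wdist_comm hSsym hSall _ _
      have e2 := hp i (i + 1) (by omega) (by omega)
      have e3 := hqqd i (by omega)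
      have e4 := hqqd (i + 1) (by omega)
      show wdist S (qq i) (qq (i + 1)) ≤ 2 * k + 1
      omega
    have tel : ∀ i, i ≤ n → wordLength T ((qq 0)⁻¹ * qq i) ≤ i * M := by
      intro i
      induction i with
      | zero => intro _; simp [wordLength_one]
      | succ i ih =>
        intro hi
        have h1 := ih (by omega)
        obtain ⟨hmem, hle⟩ := factor i (by omega)
        have e : (qq 0)⁻¹ * qq (i + 1) = ((qq 0)⁻¹ * qq i) * ((qq i)⁻¹ * qq (i + 1)) := by
          group
        rw [e]
        have h2 := wordLength_mul_le
          (hTall _ (H.mul_mem (H.inv_mem (hqqH 0)) (hqqH i))) (hTall _ hmem)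
        calc wordLength T (((qq 0)⁻¹ * qq i) * ((qq i)⁻¹ * qq (i + 1)))
            ≤ wordLength T ((qq 0)⁻¹ * qq i) + wordLength T ((qq i)⁻¹ * qq (i + 1)) := h2
          _ ≤ i * M + M := by omega
          _ = (i + 1) * M := by ring
    have hqq0 : qq 0 = 1 := by simp [hqq]
    have hqqn : qq n = h := by
      by_cases h0 : n = 0
      · have hh1 : h = 1 := eq_one_of_wordLength_eq_zero (hSall h) (by rw [← hnw, h0])
        simp [hqq, h0, hh1]
      · simp [hqq, h0]
    have final := tel n le_rfl
    rw [hqq0, hqqn] at final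
    simp only [inv_one, one_mul] at final
    rw [← hnw]
    calc (wordLength T h : ℝ) ≤ ((n * M : ℕ) : ℝ) := by exact_mod_cast final
      _ ≤ ((M : ℝ) + 1) * (n : ℝ) := by push_cast; nlinarith [Nat.cast_nonneg (α := ℝ) n]
  · -- undistorted → quasiconvex
    rintro ⟨c, hc, hcd⟩
    set c' := ⌈c⌉₊ with hc'def
    have hc' : ∀ h ∈ H, wordLength T h ≤ c' * wordLength S h := by
      intro h hh
      have h1 := hcd h hh
      have h2 : (wordLength T h : ℝ) ≤ (c' : ℝ) * (wordLength S h : ℝ) :=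
        le_trans h1 (mul_le_mul_of_nonneg_right (Nat.le_ceil c) (by positivity))
      exact_mod_cast h2
    set L := hTfin.toFinset.sup (wordLength S) with hLdef
    have hL : ∀ t ∈ T, wordLength S t ≤ L := fun t ht =>
      Finset.le_sup (hTfin.mem_toFinset.mpr ht)
    set K : ℕ := 6 * L * c' + 2 with hKdef
    set A : ℝ := 2 * δ * Real.sqrt K with hAdef
    set C : ℝ := δ + L + 1 with hCdef
    have hA : 0 ≤ A := by positivity
    have hC : 0 ≤ C := by positivity
    refine ⟨(A + C + 1) ^ 2, by positivity, ?_⟩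
    intro p n hp hp0 hpn i hi
    set D := (Finset.range (n + 1)).sup (fun j => distH S (H : Set G) (p j)) with hDdef
    obtain ⟨qi, hqiH, hqie⟩ := distH_spec (⟨1, H.one_mem⟩ : (H : Set G).Nonempty) (p i)
    have hqiD : distH S (H : Set G) (p i) ≤ D :=
      Finset.le_sup (f := fun j => distH S (H : Set G) (p j)) (Finset.mem_range.mpr (by omega))
    refine ⟨qi, hqiH, ?_⟩
    have hwqi : (wdist S (p i) qi : ℝ) ≤ (D : ℝ) := by
      rw [hqie]; exact_mod_cast hqiD
    refine le_trans hwqi ?_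
    -- it suffices to bound D
    obtain ⟨im, him, hDe⟩ := Finset.exists_mem_eq_sup (Finset.range (n + 1))
      (by simp) (fun j => distH S (H : Set G) (p j))
    have himn : im ≤ n := by simpa [Nat.lt_succ_iff] using him
    have hDm : D = distH S (H : Set G) (p im) := by rw [hDdef]; exact hDe
    set i₁ := im - 2 * D with hi1def
    set i₂ := min n (im + 2 * D) with hi2def
    have hi1n : i₁ ≤ n := by omega
    have hi2n : i₂ ≤ n := by omega
    have hi1m : i₁ ≤ im := by omega
    have hi2m : im ≤ i₂ := by omega
    have hDub : ∀ j, j ≤ n → distH S (H : Set G) (p j) ≤ D := fun j hj =>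
      Finset.le_sup (f := fun j => distH S (H : Set G) (p j)) (Finset.mem_range.mpr (by omega))
    obtain ⟨a', ha'H, ha'e⟩ := distH_spec (⟨1, H.one_mem⟩ : (H : Set G).Nonempty) (p i₁)
    obtain ⟨b', hb'H, hb'e⟩ := distH_spec (⟨1, H.one_mem⟩ : (H : Set G).Nonempty) (p i₂)
    have hd1D : wdist S (p i₁) a' ≤ D := by rw [ha'e]; exact hDub i₁ hi1n
    have hd3D : wdist S (p i₂) b' ≤ D := by rw [hb'e]; exact hDub i₂ hi2n
    obtain ⟨g1, n1, hg1, hg10, hg1n, hn1⟩ := exists_geodesic hSall (p i₁) a'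
    obtain ⟨g3, n3, hg3, hg30, hg3n, hn3⟩ := exists_geodesic hSall b' (p i₂)
    have hn1D : n1 ≤ D := by rw [hn1]; exact hd1D
    have hn3D : n3 ≤ D := by
      rw [hn3, wdist_comm hSsym hSall]; exact hd3D
    -- middle path through H
    have habH : a'⁻¹ * b' ∈ H := H.mul_mem (H.inv_mem ha'H) hb'H
    obtain ⟨lT, hlT, hlTlen, hlTprod⟩ := wordLength_spec (hTall _ habH)
    obtain ⟨w2, m2, hw2, hm2, hw20, hw2m, hq2⟩ := hpath hSsym hSall hTsub L hL lT hlT a' ha'H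
    have hw2b : w2 m2 = b' := by rw [hw2m, hlTprod]; group
    have hab : wdist S a' b' ≤ 6 * D := by
      have t1 := wdist_triangle hSall a' (p i₁) b'
      have t2 := wdist_triangle hSall (p i₁) (p i₂) b'
      have e1 : wdist S a' (p i₁) = wdist S (p i₁) a' := wdist_comm hSsym hSall _ _
      have e2 := hp i₁ i₂ (by omega) hi2n
      have e3 : i₂ - i₁ ≤ 4 * D := by omega
      omega
    have hm2b : m2 ≤ 6 * L * c' * D := by
      have h2 := hc' _ habH
      have h3 : wordLength S (a'⁻¹ * b') = wdist S a' b' := rfl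
      calc m2 ≤ L * lT.length := hm2
        _ = L * wordLength T (a'⁻¹ * b') := by rw [hlTlen]
        _ ≤ L * (c' * wdist S a' b') := Nat.mul_le_mul_left _ (h3 ▸ h2)
        _ ≤ L * (c' * (6 * D)) := Nat.mul_le_mul_left _ (Nat.mul_le_mul_left _ hab)
        _ = 6 * L * c' * D := by ring
    -- glue the three paths
    obtain ⟨w12, hw12, E1a, E1b⟩ := path_glue hg1.isPath hw2 (by rw [hg1n, hw20])
    obtain ⟨w, hwp, E2a, E2b⟩ := path_glue hw12 hg3.isPath
      (by rw [E1b (n1 + m2) (by omega), Nat.add_sub_cancel_left, hw2b, hg30])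
    set m := n1 + m2 + n3 with hmdef
    have hw0 : w 0 = p i₁ := by rw [E2a 0 (by omega), E1a 0 (by omega), hg10]
    have hwm : w m = p i₂ := by
      rw [E2b m (by omega), show m - (n1 + m2) = n3 by omega, hg3n]
    have hmKD : m ≤ K * D := by
      have hKD : K * D = 6 * L * c' * D + 2 * D := by rw [hKdef]; ring
      omega
    have hsub : IsGeodesic S (fun t => p (i₁ + t)) (i₂ - i₁) := hp.subseg i₁ (i₂ - i₁) (by omega)
    set kk := Nat.log 2 (K * D) + 1 with hkkdef
    have hmpow : m ≤ 2 ^ kk :=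
      le_trans hmKD (le_of_lt (Nat.lt_pow_succ_log_self (by norm_num) _))
    obtain ⟨j, hjm, hjd⟩ := bisect hSall hδ hslim kk w m hwp hmpow
      (fun t => p (i₁ + t)) (i₂ - i₁) hsub
      (by show p (i₁ + 0) = w 0; rw [hw0, Nat.add_zero])
      (by show p (i₁ + (i₂ - i₁)) = w m; rw [show i₁ + (i₂ - i₁) = i₂ by omega, hwm])
      (im - i₁) (by omega)
    have hjd' : (wdist S (p im) (w j) : ℝ) ≤ δ * kk := by
      have hx : i₁ + (im - i₁) = im := by omega
      simpa [hx] using hjd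
    -- case analysis on where the near point lies
    have hDone : (D : ℝ) ≤ δ * kk + L := by
      rcases le_or_gt j n1 with hA1 | hA1
      · -- on the first geodesic segment
        have hwj : w j = g1 j := by
          rw [E2a j (by omega), E1a j hA1]
        rcases le_or_gt (2 * D) im with hB1 | hB1
        · -- im ≥ 2D : the near point is far from p im
          have e2 := hp i₁ im hi1m himn
          have e3 : im - i₁ = 2 * D := by omega
          have eg : wdist S (p i₁) (g1 j) = j := by
            have h4 := hg1 0 j (by omega) hA1
            rw [hg10] at h4
            omega
          have tri := wdist_triangle hSall (p i₁) (w j) (p im)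
          have cm : wdist S (w j) (p im) = wdist S (p im) (w j) := wdist_comm hSsym hSall _ _
          rw [hwj] at tri cm
          have hge : D ≤ wdist S (p im) (g1 j) := by omega
          calc (D : ℝ) ≤ (wdist S (p im) (g1 j) : ℝ) := by exact_mod_cast hge
            _ ≤ δ * kk := by rw [← hwj]; exact hjd'
            _ ≤ δ * kk + L := by linarith [Nat.cast_nonneg (α := ℝ) L]
        · -- im < 2D : then i₁ = 0 and the segment is trivial
          have hi10 : i₁ = 0 := by omega
          have hd10 : n1 = 0 := by
            have h5 : distH S (H : Set G) (p i₁) ≤ 0 := by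
              rw [hi10]
              calc distH S (H : Set G) (p 0) ≤ wdist S (p 0) (p 0) := distH_le hp0
                _ = 0 := wdist_self S _
            omega
          have hj0 : j = 0 := by omega
          have hwj0 : w j = p 0 := by rw [hj0, hw0, hi10]
          have hge : D ≤ wdist S (p im) (w j) := by
            rw [hwj0, hDm]
            exact distH_le hp0
          calc (D : ℝ) ≤ (wdist S (p im) (w j) : ℝ) := by exact_mod_cast hge
            _ ≤ δ * kk := hjd'
            _ ≤ δ * kk + L := by linarith [Nat.cast_nonneg (α := ℝ) L]
      · rcases le_or_gt j (n1 + m2) with hA2 | hA2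
        · -- on the middle H-path
          have hwj : w j = w2 (j - n1) := by
            rw [E2a j hA2, E1b j (by omega)]
          obtain ⟨q, hqHm, hqd⟩ := hq2 (j - n1) (by omega)
          have tri := wdist_triangle hSall (p im) (w j) q
          have hge : D ≤ wdist S (p im) q := by
            rw [hDm]; exact distH_le hqHm
          have h6 : wdist S (w j) q ≤ L := by rw [hwj]; exact hqd
          have h7 : D ≤ wdist S (p im) (w j) + L := by omega
          calc (D : ℝ) ≤ (wdist S (p im) (w j) : ℝ) + (L : ℝ) := by exact_mod_cast h7
            _ ≤ δ * kk + L := by linarith [hjd']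
        · -- on the last geodesic segment
          have hwj : w j = g3 (j - (n1 + m2)) := E2b j (by omega)
          set t := j - (n1 + m2) with htdef
          have htn3 : t ≤ n3 := by omega
          have eg : wdist S (g3 t) (p i₂) = n3 - t := by
            have h4 := hg3 t n3 htn3 le_rfl
            rw [hg3n] at h4
            exact h4
          rcases le_or_gt (im + 2 * D) n with hB1 | hB1
          · have hi2e : i₂ = im + 2 * D := by omega
            have e2 := hp im i₂ hi2m hi2n
            have e3 : i₂ - im = 2 * D := by omega
            have tri := wdist_triangle hSall (p im) (w j) (p i₂)
            rw [hwj] at tri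
            have hge : D ≤ wdist S (p im) (g3 t) := by omega
            calc (D : ℝ) ≤ (wdist S (p im) (g3 t) : ℝ) := by exact_mod_cast hge
              _ ≤ δ * kk := by rw [← hwj]; exact hjd'
              _ ≤ δ * kk + L := by linarith [Nat.cast_nonneg (α := ℝ) L]
          · have hi2e : i₂ = n := by omega
            have hd30 : n3 = 0 := by
              have h5 : distH S (H : Set G) (p i₂) ≤ 0 := by
                rw [hi2e]
                calc distH S (H : Set G) (p n) ≤ wdist S (p n) (p n) := distH_le hpn
                  _ = 0 := wdist_self S _
              have h6 : n3 = wdist S (p i₂) b' := by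
                rw [hn3, wdist_comm hSsym hSall]
              omega
            have ht0 : t = 0 := by omega
            have hwjb : w j = b' := by rw [hwj, ht0, hg30]
            have hge : D ≤ wdist S (p im) (w j) := by
              rw [hwjb, hDm]
              exact distH_le hb'H
            calc (D : ℝ) ≤ (wdist S (p im) (w j) : ℝ) := by exact_mod_cast hge
              _ ≤ δ * kk := hjd'
              _ ≤ δ * kk + L := by linarith [Nat.cast_nonneg (α := ℝ) L]
    -- now the numerics: D ≤ A √D + C hence D ≤ (A+C+1)²
    have hkk1 : (kk : ℝ) ≤ 2 * (Nat.sqrt (K * D) : ℝ) + 1 := by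
      have h0 := log_le_two_sqrt (K * D)
      have h1 : kk ≤ 2 * Nat.sqrt (K * D) + 1 := by rw [hkkdef]; omega
      exact_mod_cast h1
    have hkk2 : (Nat.sqrt (K * D) : ℝ) ≤ Real.sqrt K * Real.sqrt D := by
      calc (Nat.sqrt (K * D) : ℝ) ≤ Real.sqrt ((K * D : ℕ) : ℝ) := nat_sqrt_le_real_sqrt _
        _ = Real.sqrt ((K : ℝ) * (D : ℝ)) := by push_cast; ring_nf
        _ = Real.sqrt K * Real.sqrt D := Real.sqrt_mul (by positivity) _
    have hDAC : (D : ℝ) ≤ A * Real.sqrt D + C := by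
      have h8 : δ * kk ≤ δ * (2 * (Real.sqrt K * Real.sqrt D) + 1) :=
        mul_le_mul_of_nonneg_left (by linarith) hδ
      have h9 : (D : ℝ) ≤ δ * (2 * (Real.sqrt K * Real.sqrt D) + 1) + L := by
        linarith [hDone]
      have h10 : δ * (2 * (Real.sqrt K * Real.sqrt D) + 1) + (L : ℝ)
          = 2 * δ * Real.sqrt K * Real.sqrt D + δ + L := by ring
      rw [hAdef, hCdef]
      have h11 : 2 * δ * Real.sqrt K * Real.sqrt D = (2 * δ * Real.sqrt K) * Real.sqrt D := by
        ring
      linarith [h9, h10, h11]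
    have hfin := le_sq_of_le_sqrt_mul hA hC (by positivity) hDAC
    exact hfin
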